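/- arXiv:2108.10374 — 3 statements merged into one kernel-verified Lean document; each statement's English description precedes it below -/
import Mathlib

section
/- Let d ≥ 2 and let b_1, ..., b_d ∈ (0,1] with ∏_{i=1}^d b_i = δ₀ for some δ₀ ∈ (0,1). Then ∏_{i=1}^d (1 - d + d/b_i) ≤ (d^d / δ₀) · (1 - (1 - 1/d) δ₀^{1/d})^d. -/
open Finset in
/-- Lattice-point counting estimate: if `∏ b i = δ₀` with `b i ∈ (0,1]`, then
`∏ (1 - d + d/b i) ≤ (d^d/δ₀) (1 - (1 - 1/d) δ₀^{1/d})^d`. -/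
theorem stmt_3 (d : ℕ) (hd : 2 ≤ d) (δ₀ : ℝ) (hδ₀ : δ₀ ∈ Set.Ioo (0:ℝ) 1)
    (b : Fin d → ℝ) (hb : ∀ i, b i ∈ Set.Ioc (0:ℝ) 1)
    (hprod : ∏ i, b i = δ₀) :
    ∏ i, (1 - (d : ℝ) + d / b i) ≤
      ((d : ℝ) ^ d / δ₀) * (1 - (1 - 1 / (d : ℝ)) * δ₀ ^ ((1 : ℝ) / d)) ^ d := by
  obtain ⟨hδpos, hδlt⟩ := hδ₀
  have hdpos : (0:ℝ) < d := by positivity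
  set c : ℝ := 1 - 1/(d:ℝ) with hc
  have h1d : (1:ℝ)/d ≤ 1 := by
    rw [div_le_one hdpos]; exact_mod_cast (by omega : 1 ≤ d)
  have hc0 : 0 ≤ c := by simp only [hc]; linarith
  have hc1 : c < 1 := by
    have : 0 < 1/(d:ℝ) := by positivity
    simp only [hc]; linarith
  set x : Fin d → ℝ := fun i => 1 - c * b i with hx
  have hbpos : ∀ i, 0 < b i := fun i => (hb i).1
  have hx0 : ∀ i, 0 ≤ x i := by
    intro i
    have h1 : c * b i ≤ 1 := by
      calc c * b i ≤ 1 * 1 := mul_le_mul hc1.le (hb i).2 (hbpos i).le one_pos.le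
      _ = 1 := one_mul 1
    simp only [hx]; linarith
  have hcard : (Finset.univ : Finset (Fin d)).card = d := by simp
  have hwsum : ∑ _i : Fin d, (1:ℝ)/d = 1 := by
    rw [Finset.sum_const, hcard, nsmul_eq_mul]
    field_simp
  -- factorization
  have hfac : ∏ i, (1 - (d:ℝ) + d / b i) = ((d:ℝ)^d / δ₀) * ∏ i, x i := by
    have key : ∀ i, 1 - (d:ℝ) + d / b i = (d / b i) * x i := by
      intro i
      have hbi := (hbpos i).ne'
      simp only [hx, hc]
      field_simp
      ring
    rw [Finset.prod_congr rfl (fun i _ => key i), Finset.prod_mul_distrib,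
        Finset.prod_div_distrib, Finset.prod_const, hprod, hcard]
  rw [hfac]
  have hdd : 0 < (d:ℝ)^d / δ₀ := by positivity
  refine mul_le_mul_of_nonneg_left ?_ hdd.le
  -- AM-GM for b : δ₀^(1/d) ≤ (∑ b)/d
  have amgm_b : δ₀ ^ ((1:ℝ)/d) ≤ (∑ i, b i) / d := by
    have h := Real.geom_mean_le_arith_mean_weighted Finset.univ (fun _ => (1:ℝ)/d) b
      (fun i _ => by positivity) hwsum (fun i _ => (hbpos i).le)
    rw [Real.finset_prod_rpow _ _ (fun i _ => (hbpos i).le), hprod] at h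
    calc δ₀ ^ ((1:ℝ)/d) ≤ ∑ i, (1:ℝ)/d * b i := h
      _ = (∑ i, b i) / d := by rw [Finset.sum_div]; exact Finset.sum_congr rfl fun i _ => by ring
  -- AM-GM for x
  have amgm_x : (∏ i, x i) ^ ((1:ℝ)/d) ≤ 1 - c * ((∑ i, b i)/d) := by
    have h := Real.geom_mean_le_arith_mean_weighted Finset.univ (fun _ => (1:ℝ)/d) x
      (fun i _ => by positivity) hwsum (fun i _ => hx0 i)
    rw [Real.finset_prod_rpow _ _ (fun i _ => hx0 i)] at h
    refine h.trans_eq ?_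
    have e : ∀ i : Fin d, (1:ℝ)/d * x i = (1:ℝ)/d - c/d * b i := by
      intro i; simp only [hx]; ring
    rw [Finset.sum_congr rfl (fun i _ => e i), Finset.sum_sub_distrib, hwsum,
      ← Finset.mul_sum]
    ring
  -- combine
  have hPnn : 0 ≤ ∏ i, x i := Finset.prod_nonneg (fun i _ => hx0 i)
  have hrhs : 1 - c * ((∑ i, b i)/d) ≤ 1 - c * δ₀ ^ ((1:ℝ)/d) := by
    have := mul_le_mul_of_nonneg_left amgm_b hc0
    linarith
  have hrhs0 : 0 ≤ 1 - c * δ₀ ^ ((1:ℝ)/d) := by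
    have hδ1 : δ₀ ^ ((1:ℝ)/d) ≤ 1 :=
      Real.rpow_le_one hδpos.le hδlt.le (by positivity)
    have : c * δ₀ ^ ((1:ℝ)/d) ≤ 1 :=
      mul_le_one₀ hc1.le (Real.rpow_nonneg hδpos.le _) hδ1
    linarith
  have hP : ∏ i, x i = ((∏ i, x i) ^ ((1:ℝ)/d)) ^ d := by
    rw [← Real.rpow_natCast ((∏ i, x i) ^ ((1:ℝ)/d)) d, ← Real.rpow_mul hPnn]
    rw [one_div, inv_mul_cancel₀ hdpos.ne', Real.rpow_one]
  rw [hP]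
  exact pow_le_pow_left₀ (Real.rpow_nonneg hPnn _) (amgm_x.trans hrhs) d
end

section
/- For every integer m ≥ 3, there exists x ∈ (0,1/m) with (1+x)^m (1 - m ln x) < m(ln m + ln ln m + 5). -/
/-- For `m ≥ 3` there exists `x ∈ (0, 1/m)` with
`(1+x)^m (1 - m ln x) < m (ln m + ln ln m + 5)`. -/
theorem stmt_8 (m : ℕ) (hm : 3 ≤ m) :
    ∃ x ∈ Set.Ioo (0 : ℝ) (1 / m),
      (1 + x) ^ m * (1 - m * Real.log x) <
        m * (Real.log m + Real.log (Real.log m) + 5) := by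
  have hm3 : (3:ℝ) ≤ m := by exact_mod_cast hm
  have hm0 : (0:ℝ) < m := by linarith
  set a := Real.log m with ha
  have he1 : (2.7182818283:ℝ) < Real.exp 1 := Real.exp_one_gt_d9
  have he2 : Real.exp 1 < 2.7182818286 := Real.exp_one_lt_d9
  set e := Real.exp 1 with he
  have he0 : (0:ℝ) < e := by linarith
  have ha1' : 1 < a := by
    rw [ha, Real.lt_log_iff_exp_lt hm0]
    calc Real.exp 1 < 2.7182818286 := he2
    _ ≤ m := by linarith
  have ha1 : 1 ≤ a := ha1'.le
  have ha0 : 0 < a := by linarith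
  set b := Real.log a with hb
  have hb0 : 0 ≤ b := Real.log_nonneg ha1
  -- e * b ≤ a  (i.e. log a ≤ a / e)
  have heb : e * b ≤ a := by
    have h1 : Real.log (a / e) ≤ a / e - 1 := Real.log_le_sub_one_of_pos (by positivity)
    have h2 : Real.log (a / e) = b - 1 := by
      rw [Real.log_div (by linarith) (by positivity), hb, he, Real.log_exp]
    have h3 : e * (a / e) = a := by field_simp
    nlinarith [h1, h2]
  have hmb : 2.71 * b ≤ a := by nlinarith [mul_le_mul_of_nonneg_right he1.le hb0]
  refine ⟨1 / (m * a), ⟨by positivity, ?_⟩, ?_⟩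
  · rw [div_lt_div_iff₀ (by positivity) hm0]
    nlinarith [mul_lt_mul_of_pos_left ha1' hm0]
  · set x := 1 / ((m:ℝ) * a) with hx
    have hx0 : 0 < x := by positivity
    have hlogx : Real.log x = -(a + b) := by
      rw [hx, one_div, Real.log_inv, Real.log_mul (ne_of_gt hm0) (ne_of_gt ha0)]
    have hmx : (m:ℝ) * x = 1 / a := by
      rw [hx]; field_simp
    -- (1+x)^m ≤ exp (1/a)
    have hpow : (1 + x) ^ m ≤ Real.exp (1 / a) := by
      calc (1 + x) ^ m ≤ (Real.exp x) ^ m := by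
            apply pow_le_pow_left₀ (by positivity)
            linarith [Real.add_one_le_exp x]
        _ = Real.exp ((m:ℝ) * x) := by rw [← Real.exp_nat_mul]
        _ = Real.exp (1 / a) := by rw [hmx]
    -- exp (1/a) ≤ 1 + (e-1) * (1/a)  by convexity of exp on [0,1]
    have ht0 : 0 ≤ 1 / a := by positivity
    have ht1 : 1 / a ≤ 1 := by
      rw [div_le_one ha0]; exact ha1
    have hexp : Real.exp (1 / a) ≤ 1 + (e - 1) * (1 / a) := by
      have hc := convexOn_exp.2 (Set.mem_univ (0:ℝ)) (Set.mem_univ (1:ℝ))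
        (sub_nonneg.2 ht1) ht0 (by ring)
      simp only [smul_eq_mul, mul_zero, mul_one, zero_add, Real.exp_zero] at hc
      rw [← he] at hc
      linarith
    -- key multiplied inequality
    have hkey : (a + (e - 1)) * (1 + (m:ℝ) * (a + b)) < a * ((m:ℝ) * (a + b + 5)) := by
      nlinarith [mul_le_mul_of_nonneg_left hmb (le_of_lt hm0),
        mul_le_mul_of_nonneg_right hm3 ha0.le,
        mul_le_mul_of_nonneg_right he2.le (mul_nonneg hm0.le ha0.le),
        mul_le_mul_of_nonneg_right he2.le (mul_nonneg hm0.le hb0),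
        mul_nonneg hm0.le hb0]
    have hkey2 : (1 + (e - 1) * (1 / a)) * (1 + (m:ℝ) * (a + b)) < (m:ℝ) * (a + b + 5) := by
      have heq : 1 + (e - 1) * (1 / a) = (a + (e - 1)) / a := by field_simp
      rw [heq, div_mul_eq_mul_div, div_lt_iff₀ ha0]
      nlinarith [hkey]
    have hP0 : (0:ℝ) ≤ 1 + (m:ℝ) * (a + b) := by positivity
    calc (1 + x) ^ m * (1 - (m:ℝ) * Real.log x)
        = (1 + x) ^ m * (1 + (m:ℝ) * (a + b)) := by rw [hlogx]; ring
      _ ≤ (1 + (e - 1) * (1 / a)) * (1 + (m:ℝ) * (a + b)) := by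
          apply mul_le_mul_of_nonneg_right _ hP0
          exact hpow.trans hexp
      _ < (m:ℝ) * (a + b + 5) := hkey2
end

section
/- Let d ≥ 1, ε, δ ∈ (0,1), and let 𝒩 be a δ-approximation for the family of axis-parallel boxes in [0,1]^d of volume at least ε, with |𝒩| ≥ 3. If X_1, ..., X_N are independent random points uniform on [0,1]^d with N ≥ (3 ln|𝒩|)/δ, then with probability at least 1 - 1/|𝒩| the set {X_1,...,X_N} intersects every axis-parallel box of volume at least ε. Consequently N(ε,d) ≤ (3 ln|𝒩|)/δ. -/
/-!
A fixed box `B₀` of volume at least `δ` is missed by all of `N` independent uniform points with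
probability `(1 - |B₀|)^N ≤ exp (-δ N)`. A random point set that hits every `B₀ ∈ 𝒩` of volume
at least `δ` hits every box of volume at least `ε`, since each such box contains one of them; so
by the union bound it fails with probability at most `|𝒩| exp (-δ N)`, which is `≤ 1/|𝒩|` once
`δ N ≥ 3 ln |𝒩|`. For `N = ⌊3 ln |𝒩| / δ⌋` the bound is still `< 1`, so some sample of that size
hits every box.
-/

open MeasureTheory Finset

open Real in
theorem Real.mul_exp_neg_le_inv {n t : ℝ} (hn : 0 < n) (h : 2 * log n ≤ t) :
    n * exp (-t) ≤ n⁻¹ :=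
  calc n * exp (-t) = exp (log n + -t) := by rw [exp_add, exp_log hn]
    _ ≤ exp (-log n) := exp_le_exp.2 (by linarith)
    _ = n⁻¹ := by rw [exp_neg, exp_log hn]

open Real in
theorem Real.mul_exp_neg_lt_one {n t : ℝ} (hn : 0 < n) (h : log n < t) : n * exp (-t) < 1 :=
  calc n * exp (-t) = exp (log n + -t) := by rw [exp_add, exp_log hn]
    _ < exp 0 := exp_lt_exp.2 (by linarith)
    _ = 1 := exp_zero

section Sampling

variable {α : Type*} [MeasurableSpace α] (ν : Measure α) [IsProbabilityMeasure ν]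

theorem measureReal_pi_forall_notMem (N : ℕ) {B : Set α} (hB : MeasurableSet B) :
    (Measure.pi fun _ : Fin N => ν).real {ω | ∀ j, ω j ∉ B} = (1 - ν.real B) ^ N := by
  have hpi : {ω : Fin N → α | ∀ j, ω j ∉ B} = Set.univ.pi fun _ => Bᶜ := by ext; simp
  rw [hpi, measureReal_def, Measure.pi_pi, ENNReal.toReal_prod, ← measureReal_def,
    probReal_compl_eq_one_sub hB, prod_const, card_univ, Fintype.card_fin]

theorem measureReal_pi_forall_notMem_le_exp (N : ℕ) {B : Set α} (hB : MeasurableSet B) {δ : ℝ}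
    (hδ : δ ≤ ν.real B) :
    (Measure.pi fun _ : Fin N => ν).real {ω | ∀ j, ω j ∉ B} ≤ Real.exp (-(δ * N)) :=
  calc _ = (1 - ν.real B) ^ N := measureReal_pi_forall_notMem ν N hB
    _ ≤ Real.exp (-ν.real B) ^ N :=
      pow_le_pow_left₀ (sub_nonneg.2 measureReal_le_one) (Real.one_sub_le_exp_neg _) N
    _ = Real.exp (-(ν.real B * N)) := by rw [← Real.exp_nat_mul]; ring_nf
    _ ≤ Real.exp (-(δ * N)) := by gcongr

theorem one_sub_card_mul_exp_le_measureReal_pi {ι : Type*} (s : Finset ι) (B : ι → Set α)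
    (hB : ∀ i ∈ s, MeasurableSet (B i)) {δ : ℝ} (hδ : ∀ i ∈ s, δ ≤ ν.real (B i)) (N : ℕ)
    {S : Set (Fin N → α)} (hS : ∀ ω, (∀ i ∈ s, ∃ j, ω j ∈ B i) → ω ∈ S) :
    1 - #s * Real.exp (-(δ * N)) ≤ (Measure.pi fun _ : Fin N => ν).real S := by
  set μ := Measure.pi fun _ : Fin N => ν
  set miss := ⋃ i ∈ s, {ω : Fin N → α | ∀ j, ω j ∉ B i}
  have hmiss : MeasurableSet miss := by
    refine .biUnion s.countable_toSet fun i hi => ?_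
    simp only [Set.ofPred_forall]
    exact .iInter fun j => (hB i hi).compl.preimage (measurable_pi_apply j)
  have hsub : missᶜ ⊆ S := fun ω hω => hS ω fun i hi => by
    by_contra! hmissed
    exact hω (Set.mem_biUnion hi hmissed)
  calc 1 - #s * Real.exp (-(δ * N))
      ≤ 1 - μ.real miss := by
        gcongr
        calc μ.real miss ≤ ∑ i ∈ s, μ.real {ω | ∀ j, ω j ∉ B i} :=
              measureReal_biUnion_finset_le _ _
          _ ≤ ∑ _i ∈ s, Real.exp (-(δ * N)) := sum_le_sum fun i hi =>
              measureReal_pi_forall_notMem_le_exp ν N (hB i hi) (hδ i hi)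
          _ = #s * Real.exp (-(δ * N)) := by rw [sum_const, nsmul_eq_mul]
    _ = μ.real missᶜ := (probReal_compl_eq_one_sub hmiss).symm
    _ ≤ μ.real S := measureReal_mono hsub

theorem exists_mem_forall_mem_of_measure_pi_ne_zero {N : ℕ} {C : Set α} (hC : MeasurableSet C)
    (hνC : ν C = 1) {S : Set (Fin N → α)} (hS : (Measure.pi fun _ : Fin N => ν) S ≠ 0) :
    ∃ ω ∈ S, ∀ j, ω j ∈ C := by
  have hconull : (Measure.pi fun _ : Fin N => ν) (Set.univ.pi fun _ => C)ᶜ = 0 := by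
    rw [prob_compl_eq_zero_iff (.univ_pi fun _ => hC), Measure.pi_pi]
    simp [hνC]
  obtain ⟨ω, hωS, hωC⟩ := nonempty_of_measure_ne_zero (by rwa [measure_inter_conull hconull])
  exact ⟨ω, hωS, fun j => hωC j (Set.mem_univ j)⟩

end Sampling

section Boxes

variable {d : ℕ}

def unitCube (d : ℕ) : Set (Fin d → ℝ) := Set.univ.pi fun _ => Set.Icc 0 1

def halfOpenBox (a b : Fin d → ℝ) : Set (Fin d → ℝ) := Set.univ.pi fun i => Set.Ico (a i) (b i)

theorem measurableSet_halfOpenBox (a b : Fin d → ℝ) : MeasurableSet (halfOpenBox a b) :=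
  .univ_pi fun _ => measurableSet_Ico

theorem halfOpenBox_subset_halfOpenBox {a b a' b' : Fin d → ℝ} (h : ∀ i, a i ≤ a' i ∧ b' i ≤ b i) :
    halfOpenBox a' b' ⊆ halfOpenBox a b :=
  Set.pi_mono fun i _ => Set.Ico_subset_Ico (h i).1 (h i).2

theorem halfOpenBox_subset_unitCube {a b : Fin d → ℝ} (h : ∀ i, 0 ≤ a i ∧ a i ≤ b i ∧ b i ≤ 1) :
    halfOpenBox a b ⊆ unitCube d :=
  Set.pi_mono fun i _ => Set.Ico_subset_Icc_self.trans (Set.Icc_subset_Icc (h i).1 (h i).2.2)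

theorem volume_unitCube : volume (unitCube d) = 1 := by
  simp [unitCube, Real.volume_Icc_pi]

instance : IsProbabilityMeasure (volume.restrict (unitCube d)) :=
  ⟨by rw [Measure.restrict_apply_univ, volume_unitCube]⟩

theorem measureReal_restrict_unitCube_halfOpenBox {a b : Fin d → ℝ}
    (h : ∀ i, 0 ≤ a i ∧ a i ≤ b i ∧ b i ≤ 1) :
    (volume.restrict (unitCube d)).real (halfOpenBox a b) = ∏ i, (b i - a i) := by
  rw [measureReal_restrict_apply (measurableSet_halfOpenBox a b),
    Set.inter_eq_left.2 (halfOpenBox_subset_unitCube h), measureReal_def, halfOpenBox,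
    Real.volume_pi_Ico_toReal fun i => (h i).2.1]

theorem one_sub_card_mul_exp_le_measureReal_hit_boxes {ε δ : ℝ}
    (𝒩 : Finset ((Fin d → ℝ) × (Fin d → ℝ)))
    (h𝒩box : ∀ p ∈ 𝒩, ∀ i, 0 ≤ p.1 i ∧ p.1 i ≤ p.2 i ∧ p.2 i ≤ 1)
    (happrox : ∀ a b : Fin d → ℝ, (∀ i, 0 ≤ a i ∧ a i ≤ b i ∧ b i ≤ 1) →
      ε ≤ ∏ i, (b i - a i) →
      ∃ p ∈ 𝒩, (∀ i, a i ≤ p.1 i ∧ p.2 i ≤ b i) ∧ δ ≤ ∏ i, (p.2 i - p.1 i)) (N : ℕ) :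
    1 - #𝒩 * Real.exp (-(δ * N)) ≤
      (Measure.pi fun _ : Fin N => volume.restrict (unitCube d)).real
        {ω | ∀ a b : Fin d → ℝ, (∀ i, 0 ≤ a i ∧ a i ≤ b i ∧ b i ≤ 1) →
          ε ≤ ∏ i, (b i - a i) → ∃ j, ω j ∈ halfOpenBox a b} := by
  classical
  set 𝒩δ := 𝒩.filter fun p => δ ≤ ∏ i, (p.2 i - p.1 i)
  have hδ : ∀ p ∈ 𝒩δ, δ ≤ (volume.restrict (unitCube d)).real (halfOpenBox p.1 p.2) :=
    fun p hp => by
      rw [mem_filter] at hp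
      rw [measureReal_restrict_unitCube_halfOpenBox (h𝒩box p hp.1)]
      exact hp.2
  refine le_trans ?_ (one_sub_card_mul_exp_le_measureReal_pi _ 𝒩δ (fun p => halfOpenBox p.1 p.2)
    (fun p _ => measurableSet_halfOpenBox _ _) hδ N fun ω hω a b hab hε => ?_)
  · gcongr
    exact filter_subset _ _
  · obtain ⟨p, hp𝒩, hpab, hpδ⟩ := happrox a b hab hε
    obtain ⟨j, hj⟩ := hω p (mem_filter.2 ⟨hp𝒩, hpδ⟩)
    exact ⟨j, halfOpenBox_subset_halfOpenBox hpab hj⟩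

end Boxes

theorem stmt_10_general (d : ℕ) (ε δ : ℝ)
    (hδ : δ ∈ Set.Ioo (0:ℝ) 1)
    (𝒩 : Finset ((Fin d → ℝ) × (Fin d → ℝ)))
    (h𝒩box : ∀ p ∈ 𝒩, ∀ i, 0 ≤ p.1 i ∧ p.1 i ≤ p.2 i ∧ p.2 i ≤ 1)
    (h𝒩card : 3 ≤ 𝒩.card)
    (happrox : ∀ a b : Fin d → ℝ, (∀ i, 0 ≤ a i ∧ a i ≤ b i ∧ b i ≤ 1) →
      ε ≤ ∏ i, (b i - a i) →
      ∃ p ∈ 𝒩, (∀ i, a i ≤ p.1 i ∧ p.2 i ≤ b i) ∧ δ ≤ ∏ i, (p.2 i - p.1 i)) :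
    (∀ N : ℕ, 3 * Real.log 𝒩.card / δ ≤ N →
      1 - 1 / (𝒩.card : ℝ) ≤
        ((Measure.pi fun _ : Fin N =>
            (volume : Measure (Fin d → ℝ)).restrict (Set.univ.pi fun _ => Set.Icc (0:ℝ) 1))
          {ω : Fin N → (Fin d → ℝ) |
            ∀ a b : Fin d → ℝ, (∀ i, 0 ≤ a i ∧ a i ≤ b i ∧ b i ≤ 1) →
              ε ≤ ∏ i, (b i - a i) →
              ∃ j, ω j ∈ Set.univ.pi fun i => Set.Ico (a i) (b i)}).toReal) ∧
    ∃ P : Finset (Fin d → ℝ),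
      (P : Set (Fin d → ℝ)) ⊆ (Set.univ.pi fun _ => Set.Icc (0:ℝ) 1) ∧
      (P.card : ℝ) ≤ 3 * Real.log 𝒩.card / δ ∧
      ∀ a b : Fin d → ℝ, (∀ i, 0 ≤ a i ∧ a i ≤ b i ∧ b i ≤ 1) →
        ε < ∏ i, (b i - a i) →
        ∃ x ∈ P, x ∈ Set.univ.pi fun i => Set.Ico (a i) (b i) := by
  classical
  obtain ⟨hδ0, hδ1⟩ := hδ
  have hn : (3 : ℝ) ≤ #𝒩 := by exact_mod_cast h𝒩card
  have hlog : 1 < Real.log #𝒩 := by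
    rw [Real.lt_log_iff_exp_lt (by positivity)]
    linarith [Real.exp_one_lt_d9]
  have hsample := one_sub_card_mul_exp_le_measureReal_hit_boxes 𝒩 h𝒩box happrox
  refine ⟨fun N hN => le_trans ?_ (hsample N), ?_⟩
  · rw [div_le_iff₀ hδ0] at hN
    rw [one_div]
    gcongr
    exact Real.mul_exp_neg_le_inv (by positivity) (by linarith)
  · set M := ⌊3 * Real.log #𝒩 / δ⌋₊
    have hM : Real.log #𝒩 < δ * M :=
      calc Real.log #𝒩 < 3 * Real.log #𝒩 - δ := by linarith
        _ = δ * (3 * Real.log #𝒩 / δ - 1) := by field_simp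
        _ < δ * M := by gcongr; exact Nat.sub_one_lt_floor _
    have hpos := (sub_pos.2 (Real.mul_exp_neg_lt_one (by positivity) hM)).trans_le (hsample M)
    obtain ⟨ω, hω, hωcube⟩ := exists_mem_forall_mem_of_measure_pi_ne_zero
      (volume.restrict (unitCube d)) (MeasurableSet.univ_pi fun _ => measurableSet_Icc)
      (Measure.restrict_apply_self _ _ |>.trans volume_unitCube)
      ((measureReal_ne_zero_iff (measure_ne_top _ _)).1 hpos.ne')
    refine ⟨univ.image ω, ?_, ?_, fun a b hab hε => ?_⟩
    · simpa [Set.subset_def] using hωcube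
    · calc (#(univ.image ω) : ℝ) ≤ M := by
            exact_mod_cast card_image_le.trans (card_univ.trans (Fintype.card_fin M)).le
        _ ≤ 3 * Real.log #𝒩 / δ := Nat.floor_le (by positivity)
    · obtain ⟨j, hj⟩ := hω a b hab hε.le
      exact ⟨ω j, mem_image_of_mem ω (mem_univ j), hj⟩

/-- Union-bound lemma: given a `δ`-approximation `𝒩` (of cardinality ≥ 3) for the
boxes of volume ≥ ε, `N ≥ 3 ln|𝒩|/δ` independent uniform points hit every box of
volume ≥ ε with probability at least `1 - 1/|𝒩|`; consequently `N(ε,d) ≤ 3 ln|𝒩|/δ`. -/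
theorem stmt_10 (d : ℕ) (hd : 1 ≤ d) (ε δ : ℝ)
    (hε : ε ∈ Set.Ioo (0:ℝ) 1) (hδ : δ ∈ Set.Ioo (0:ℝ) 1)
    (𝒩 : Finset ((Fin d → ℝ) × (Fin d → ℝ)))
    (h𝒩box : ∀ p ∈ 𝒩, ∀ i, 0 ≤ p.1 i ∧ p.1 i ≤ p.2 i ∧ p.2 i ≤ 1)
    (h𝒩card : 3 ≤ 𝒩.card)
    (happrox : ∀ a b : Fin d → ℝ, (∀ i, 0 ≤ a i ∧ a i ≤ b i ∧ b i ≤ 1) →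
      ε ≤ ∏ i, (b i - a i) →
      ∃ p ∈ 𝒩, (∀ i, a i ≤ p.1 i ∧ p.2 i ≤ b i) ∧ δ ≤ ∏ i, (p.2 i - p.1 i)) :
    (∀ N : ℕ, 3 * Real.log 𝒩.card / δ ≤ N →
      1 - 1 / (𝒩.card : ℝ) ≤
        ((Measure.pi fun _ : Fin N =>
            (volume : Measure (Fin d → ℝ)).restrict (Set.univ.pi fun _ => Set.Icc (0:ℝ) 1))
          {ω : Fin N → (Fin d → ℝ) |
            ∀ a b : Fin d → ℝ, (∀ i, 0 ≤ a i ∧ a i ≤ b i ∧ b i ≤ 1) →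
              ε ≤ ∏ i, (b i - a i) →
              ∃ j, ω j ∈ Set.univ.pi fun i => Set.Ico (a i) (b i)}).toReal) ∧
    ∃ P : Finset (Fin d → ℝ),
      (P : Set (Fin d → ℝ)) ⊆ (Set.univ.pi fun _ => Set.Icc (0:ℝ) 1) ∧
      (P.card : ℝ) ≤ 3 * Real.log 𝒩.card / δ ∧
      ∀ a b : Fin d → ℝ, (∀ i, 0 ≤ a i ∧ a i ≤ b i ∧ b i ≤ 1) →
        ε < ∏ i, (b i - a i) →
        ∃ x ∈ P, x ∈ Set.univ.pi fun i => Set.Ico (a i) (b i) :=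
  stmt_10_general d ε δ hδ 𝒩 h𝒩box h𝒩card happrox
end
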